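/- Let π_f be a cyclic *-representation of R_∞ with cyclic vector ξ_f realizing an S_∞-central state f. Then for each k, the weak operator limit O_k = lim_n π_f((k n)) exists, the operators O_k pairwise commute, and π_f(s) O_k π_f(s⁻¹) = O_{s(k)} for all s ∈ S_∞. -/

import Mathlib

open scoped ComplexInnerProductSpace
open Filter Topology

/-- Partial maps of `ℕ`, modeling elements of the symmetric inverse semigroup `R_∞`. -/
def PB := ℕ → Option ℕ

/-- Composition of partial maps: `(a * b)(x) = a(b(x))`. -/
def PB.mul (a b : PB) : PB := fun x => (b x).bind a

/-- The identity of `R_∞`. -/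
def PB.one : PB := fun x => some x

/-- Membership in `R_∞`: injective, identity outside a finite set. -/
def PB.Valid (g : PB) : Prop :=
  (∀ x y z, g x = some z → g y = some z → x = y) ∧ {x | g x ≠ some x}.Finite

/-- A permutation of `ℕ` viewed as an element of `R_∞`. -/
def permPB (s : Equiv.Perm ℕ) : PB := fun x => some (s x)

/-- Finite (finitary) permutations of `ℕ`: the elements of `S_∞ ⊂ R_∞`. -/
def FinPerm (s : Equiv.Perm ℕ) : Prop := {x | s x ≠ x}.Finite

/-!
Since `π` is contractive, `π (r* r)` is an idempotent contraction, hence an orthogonal projection,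
and this forces `π r* = π (r*)`. So `⟪π (k n) π a ξ, π b ξ⟫ = f (b* (k n) a)`. When `n` and `m`
lie outside the supports of `a` and `b`, the transposition `(n m)` commutes with `a` and `b*` and
conjugates `(k n)` into `(k m)`; centrality of `f` then makes the coefficient independent of `n`.
So the coefficients are eventually constant on the cyclic vectors, and as the `π (k n)` are
contractions and the cyclic vectors span a dense subspace, they converge for all vectors, which
defines `O k`. The same conjugations turn `O k O l` into `π ((k N) (l N+1))` and `O l O k` into
`π ((l N) (k N+1))` on cyclic vectors, and these are conjugate by `(N N+1)`. Covariance comes from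
`s (k n) s⁻¹ = (s k, n)` for all large `n`.
-/

theorem FinPerm.mul {s t : Equiv.Perm ℕ} (hs : FinPerm s) (ht : FinPerm t) : FinPerm (s * t) :=
  (hs.union ht).subset fun x hx => by
    by_contra h
    simp only [Set.mem_union, Set.mem_ofPred_eq, not_or, not_not] at h
    exact hx (by rw [Equiv.Perm.mul_apply, h.2, h.1])

theorem FinPerm.inv {s : Equiv.Perm ℕ} (hs : FinPerm s) : FinPerm s⁻¹ :=
  hs.subset fun x hx h => hx (by rw [Equiv.Perm.inv_eq_iff_eq, h])

theorem finPerm_swap (k n : ℕ) : FinPerm (Equiv.swap k n) :=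
  (Set.toFinite {k, n}).subset fun x hx => by
    by_contra h
    simp only [Set.mem_insert_iff, Set.mem_singleton_iff, not_or] at h
    exact hx (Equiv.swap_apply_of_ne_of_ne h.1 h.2)

@[simp] theorem permPB_apply (s : Equiv.Perm ℕ) (x : ℕ) : permPB s x = some (s x) := rfl

theorem permPB_mul_permPB (s t : Equiv.Perm ℕ) : (permPB s).mul (permPB t) = permPB (s * t) := rfl

theorem permPB_one : permPB 1 = PB.one := rfl

namespace PB

@[simp] theorem bind_some (f : PB) (x : ℕ) : (some x).bind f = f x := rfl

@[simp] theorem bind_none (f : PB) : (none : Option ℕ).bind f = none := rfl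

theorem mul_apply (a b : PB) (x : ℕ) : a.mul b x = (b x).bind a := rfl

theorem mul_assoc (a b c : PB) : (a.mul b).mul c = a.mul (b.mul c) := by
  funext x
  simp only [PB.mul]
  cases c x <;> rfl

theorem mul_one (a : PB) : a.mul PB.one = a := rfl

theorem Valid.mul {a b : PB} (ha : a.Valid) (hb : b.Valid) : (a.mul b).Valid := by
  refine ⟨fun x y z hx hy => ?_, (ha.2.union hb.2).subset fun x hx => ?_⟩
  · rw [mul_apply] at hx hy
    rcases hbx : b x with _ | u <;> rcases hby : b y with _ | v <;>
      simp only [hbx, hby, bind_none, bind_some, reduceCtorEq] at hx hy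
    exact hb.1 x y u hbx (ha.1 u v z hx hy ▸ hby)
  · by_contra h
    simp only [Set.mem_union, Set.mem_ofPred_eq, not_or, not_not] at h
    exact hx (by rw [mul_apply, h.2, bind_some, h.1])

theorem _root_.FinPerm.permPB_valid {s : Equiv.Perm ℕ} (hs : FinPerm s) : (permPB s).Valid :=
  ⟨fun x y z hx hy => s.injective (Option.some_injective _ (hx.trans hy.symm)),
    by simpa [FinPerm] using hs⟩

open Classical in
/-- The involution `g ↦ g*` of `R_∞`: the partial inverse. -/
noncomputable def inv (g : PB) : PB := fun y =>
  if h : ∃ x, g x = some y then some h.choose else none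

theorem inv_eq_some_iff {g : PB} (hg : g.Valid) {x y : ℕ} : g.inv y = some x ↔ g x = some y := by
  constructor
  · intro h
    simp only [inv] at h
    split_ifs at h with hex
    exact Option.some_injective _ h ▸ hex.choose_spec
  · intro h
    have hex : ∃ x, g x = some y := ⟨x, h⟩
    simp only [inv, dif_pos hex, hg.1 _ _ _ hex.choose_spec h]

theorem _root_.FinPerm.inv_permPB {s : Equiv.Perm ℕ} (hs : FinPerm s) :
    (permPB s).inv = permPB s⁻¹ :=
  funext fun y => (inv_eq_some_iff hs.permPB_valid).2 (by simp [permPB])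

theorem mul_inv_mul {g : PB} (hg : g.Valid) : (g.mul g.inv).mul g = g := by
  funext x
  rcases h : g x with _ | y
  · simp [mul_apply, h]
  · simp [mul_apply, h, (inv_eq_some_iff hg).2 h]

theorem inv_mul_inv {g : PB} (hg : g.Valid) : (g.inv.mul g).mul g.inv = g.inv := by
  funext y
  rcases h : g.inv y with _ | x
  · simp [mul_apply, h]
  · simp [mul_apply, h, (inv_eq_some_iff hg).1 h]

def support (a : PB) : Set ℕ := {x | a x ≠ some x} ∪ {y | ∃ x, a x = some y ∧ x ≠ y}

theorem Valid.support_finite {a : PB} (ha : a.Valid) : a.support.Finite := by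
  refine ha.2.union ((ha.2.image fun x => (a x).getD 0).subset ?_)
  rintro y ⟨x, hxy, hne⟩
  exact ⟨x, by simpa [hxy] using Ne.symm hne, by simp [hxy]⟩

theorem apply_eq_of_notMem_support {a : PB} {x : ℕ} (hx : x ∉ a.support) : a x = some x := by
  by_contra h
  exact hx (Or.inl h)

theorem support_inv_subset {g : PB} (hg : g.Valid) : g.inv.support ⊆ g.support := by
  rintro y (hy | ⟨z, hzy, hne⟩)
  · rcases h : g.inv y with _ | x
    · refine Or.inl fun hgy => ?_
      simp [(inv_eq_some_iff hg).2 hgy] at h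
    · refine Or.inr ⟨x, (inv_eq_some_iff hg).1 h, fun hxy => hy ?_⟩
      rw [h, hxy]
  · refine Or.inl fun hgy => hne ?_
    exact Option.some_injective _ (((inv_eq_some_iff hg).1 hzy).symm.trans hgy)

theorem Valid.inv {g : PB} (hg : g.Valid) : g.inv.Valid :=
  ⟨fun _ _ _ hx hy =>
      Option.some_injective _ (((inv_eq_some_iff hg).1 hx).symm.trans ((inv_eq_some_iff hg).1 hy)),
    hg.support_finite.subset fun _ hx => support_inv_subset hg (Or.inl hx)⟩

theorem support_mul_subset (a b : PB) : (a.mul b).support ⊆ a.support ∪ b.support := by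
  intro y hy
  by_contra h
  simp only [Set.mem_union, not_or] at h
  rcases hy with hy | ⟨x, hxy, hne⟩
  · exact hy (by rw [mul_apply, apply_eq_of_notMem_support h.2, bind_some,
      apply_eq_of_notMem_support h.1])
  · rw [mul_apply] at hxy
    rcases hbx : b x with _ | z
    · simp [hbx] at hxy
    · rw [hbx, bind_some] at hxy
      by_cases hzy : z = y
      · exact h.2 (Or.inr ⟨x, hzy ▸ hbx, hne⟩)
      · exact h.1 (Or.inr ⟨z, hxy, hzy⟩)

theorem support_permPB_subset (σ : Equiv.Perm ℕ) : (permPB σ).support ⊆ {x | σ x ≠ x} := by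
  rintro y (hy | ⟨x, hxy, hne⟩)
  · exact fun h => hy (by simp [h])
  · simp only [permPB_apply, Option.some.injEq] at hxy
    exact fun h => hne (σ.injective (hxy.trans h.symm))

theorem _root_.permPB_mul_comm {τ : Equiv.Perm ℕ} {a : PB} (hτ : ∀ x ∈ a.support, τ x = x) :
    (permPB τ).mul a = a.mul (permPB τ) := by
  funext x
  simp only [mul_apply, permPB_apply, bind_some]
  by_cases hx : τ x = x
  · rw [hx]
    rcases h : a x with _ | y
    · rfl
    · by_cases hxy : x = y
      · simp [← hxy, hx]
      · simp [hτ y (Or.inr ⟨x, h, hxy⟩)]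
  · have hxa : x ∉ a.support := fun h => hx (hτ x h)
    have hτxa : τ x ∉ a.support := fun h => hx (τ.injective (hτ _ h))
    simp [apply_eq_of_notMem_support hxa, apply_eq_of_notMem_support hτxa]

end PB

theorem cauchySeq_of_lipschitzWith_of_dense {X Y : Type*} [PseudoMetricSpace X]
    [PseudoMetricSpace Y] {f : ℕ → X → Y} {K : NNReal} (hf : ∀ n, LipschitzWith K (f n))
    {D : Set X} (hD : Dense D) (h : ∀ y ∈ D, CauchySeq fun n => f n y) (x : X) :
    CauchySeq fun n => f n x := by
  rw [Metric.cauchySeq_iff']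
  intro ε hε
  obtain ⟨y, hyD, hxy⟩ := hD.exists_dist_lt x (by positivity : 0 < ε / 3 / (K + 1))
  have hKxy : K * dist x y < ε / 3 := by
    calc (K : ℝ) * dist x y ≤ (K + 1) * dist x y := by gcongr; linarith
      _ < ε / 3 := by rwa [lt_div_iff₀' (by positivity)] at hxy
  obtain ⟨N, hN⟩ := Metric.cauchySeq_iff'.1 (h y hyD) (ε / 3) (by positivity)
  refine ⟨N, fun n hn => ?_⟩
  calc dist (f n x) (f N x) ≤ dist (f n x) (f n y) + dist (f n y) (f N y) + dist (f N y) (f N x) :=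
        dist_triangle4 _ _ _ _
    _ < ε / 3 + ε / 3 + ε / 3 := by
        gcongr
        · exact ((hf n).dist_le_mul x y).trans_lt hKxy
        · exact hN n hn
        · exact ((hf N).dist_le_mul y x).trans_lt (dist_comm x y ▸ hKxy)
    _ = ε := by ring

section HilbertSpace

open scoped InnerProductSpace

variable {𝕜 E : Type*} [RCLike 𝕜] [NormedAddCommGroup E] [InnerProductSpace 𝕜 E]

theorem inner_eq_zero_of_forall_norm_le_norm_add_smul {u v : E}
    (h : ∀ c : 𝕜, ‖u‖ ≤ ‖u + c • v‖) : ⟪u, v⟫_𝕜 = 0 := by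
  by_contra hp
  set p := ⟪u, v⟫_𝕜
  have hp0 : 0 < ‖p‖ := norm_pos_iff.2 hp
  -- `‖u - t p̄ v‖² ≥ ‖u‖²` gives `2 ≤ t ‖v‖²` for every `t > 0`
  set t : ℝ := 1 / (1 + ‖v‖ ^ 2)
  have ht : 0 < t := by positivity
  have htv : t * ‖v‖ ^ 2 < 1 := by
    rw [div_mul_eq_mul_div, one_mul, div_lt_one (by positivity)]; linarith
  have hsq := pow_le_pow_left₀ (norm_nonneg _) (h (-(t : 𝕜) * starRingEnd 𝕜 p)) 2
  rw [norm_add_sq (𝕜 := 𝕜), inner_smul_right, norm_smul, mul_assoc, RCLike.conj_mul] at hsq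
  simp only [norm_mul, norm_neg, RCLike.norm_ofReal, abs_of_pos ht, RCLike.norm_conj] at hsq
  norm_cast at hsq
  nlinarith [mul_pos (mul_pos ht (pow_pos hp0 2)) (by linarith : (0 : ℝ) < 2 - t * ‖v‖ ^ 2)]

theorem norm_inner_apply_le {T : E →L[𝕜] E} {C : ℝ} (hT : ‖T‖ ≤ C) (x y : E) :
    ‖⟪T x, y⟫_𝕜‖ ≤ C * ‖x‖ * ‖y‖ :=
  (norm_inner_le_norm _ _).trans (by gcongr; exact T.le_of_opNorm_le hT x)

theorem exists_tendsto_inner_of_mem_span {ι : Type*} {l : Filter ι} {T : ι → E →L[𝕜] E}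
    {S : Set E} (h : ∀ x ∈ S, ∀ y ∈ S, ∃ c, Tendsto (fun i => ⟪T i x, y⟫_𝕜) l (𝓝 c))
    {x y : E} (hx : x ∈ Submodule.span 𝕜 S) (hy : y ∈ Submodule.span 𝕜 S) :
    ∃ c, Tendsto (fun i => ⟪T i x, y⟫_𝕜) l (𝓝 c) := by
  induction hx, hy using Submodule.span_induction₂ with
  | mem_mem x y hx hy => exact h x hx y hy
  | zero_left y _ => exact ⟨0, by simpa using tendsto_const_nhds⟩
  | zero_right x _ => exact ⟨0, by simpa using tendsto_const_nhds⟩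
  | add_left x y z _ _ _ hxz hyz =>
    obtain ⟨c, hc⟩ := hxz; obtain ⟨d, hd⟩ := hyz
    exact ⟨c + d, by simpa only [map_add, inner_add_left] using hc.add hd⟩
  | add_right x y z _ _ _ hxy hxz =>
    obtain ⟨c, hc⟩ := hxy; obtain ⟨d, hd⟩ := hxz
    exact ⟨c + d, by simpa only [inner_add_right] using hc.add hd⟩
  | smul_left r x y _ _ hxy =>
    obtain ⟨c, hc⟩ := hxy
    exact ⟨starRingEnd 𝕜 r * c, by simpa only [map_smul, inner_smul_left] using hc.const_mul _⟩
  | smul_right r x y _ _ hxy =>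
    obtain ⟨c, hc⟩ := hxy
    exact ⟨r * c, by simpa only [inner_smul_right] using hc.const_mul r⟩

theorem ContinuousLinearMap.ext_of_inner_of_dense_span {S : Set E}
    (hS : Dense (Submodule.span 𝕜 S : Set E)) {A B : E →L[𝕜] E}
    (h : ∀ x ∈ S, ∀ y ∈ S, ⟪A x, y⟫_𝕜 = ⟪B x, y⟫_𝕜) : A = B := by
  refine ContinuousLinearMap.ext_on hS fun x hx => ext_inner_right 𝕜 fun y => ?_
  have := ContinuousLinearMap.ext_on hS (f := innerSL 𝕜 (A x)) (g := innerSL 𝕜 (B x))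
    fun y hy => by simpa using h x hx y hy
  simpa using congrArg (· y) this

variable [CompleteSpace E]

theorem isSelfAdjoint_of_isIdempotentElem_of_norm_le_one {P : E →L[𝕜] E}
    (hP : IsIdempotentElem P) (h1 : ‖P‖ ≤ 1) : IsSelfAdjoint P := by
  rw [ContinuousLinearMap.isSelfAdjoint_iff_isSymmetric,
    LinearMap.IsIdempotentElem.isSymmetric_iff_isOrtho_range_ker
      (ContinuousLinearMap.isIdempotentElem_toLinearMap_iff.2 hP), Submodule.isOrtho_iff_inner_eq]
  rintro _ ⟨w, rfl⟩ v hv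
  refine inner_eq_zero_of_forall_norm_le_norm_add_smul fun c => ?_
  have hPP : P (P w) = P w := congrArg (· w) hP.eq
  calc ‖P w‖ = ‖P (P w + c • v)‖ := by
        rw [map_add, map_smul, show P v = 0 from hv, smul_zero, add_zero]; exact congrArg _ hPP.symm
    _ ≤ ‖P w + c • v‖ := P.le_of_opNorm_le h1 _ |>.trans_eq (one_mul _)

/-- `S T` and `T S` are idempotent contractions, hence orthogonal projections, and
`‖T x‖ = ‖S T x‖` then gives `T* T = S T`. -/
theorem ContinuousLinearMap.adjoint_eq_of_contractive_pseudoinverse {T S : E →L[𝕜] E}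
    (hT : ‖T‖ ≤ 1) (hS : ‖S‖ ≤ 1) (hTST : T * S * T = T) (hSTS : S * T * S = S) :
    adjoint T = S := by
  have hSTST : IsIdempotentElem (S * T) := by rw [IsIdempotentElem, ← _root_.mul_assoc, hSTS]
  have hST : IsSelfAdjoint (S * T) :=
    isSelfAdjoint_of_isIdempotentElem_of_norm_le_one hSTST
      ((norm_mul_le _ _).trans (mul_le_one₀ hS (norm_nonneg _) hT))
  have hTS : IsSelfAdjoint (T * S) :=
    isSelfAdjoint_of_isIdempotentElem_of_norm_le_one
      (by rw [IsIdempotentElem, ← _root_.mul_assoc, hTST])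
      ((norm_mul_le _ _).trans (mul_le_one₀ hT (norm_nonneg _) hS))
  have hnorm : ∀ x, ‖T x‖ = ‖(S * T) x‖ := fun x => le_antisymm
    (calc ‖T x‖ = ‖T ((S * T) x)‖ := by rw [← mul_apply_eq_comp, ← _root_.mul_assoc, hTST]
      _ ≤ ‖(S * T) x‖ := T.le_of_opNorm_le hT _ |>.trans_eq (one_mul _))
    (S.le_of_opNorm_le hS _ |>.trans_eq (one_mul _))
  have hTT : star T * T = S * T := by
    rw [← sub_eq_zero]
    have hsymm := ((IsSelfAdjoint.star_mul_self T).sub hST).isSymmetric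
    refine coe_inj.1 ((hsymm.inner_map_self_eq_zero).1 fun x => ?_)
    have hproj : ⟪(S * T) x, x⟫_𝕜 = ⟪(S * T) x, (S * T) x⟫_𝕜 := by
      conv_lhs => rw [← hSTST.eq, mul_apply_eq_comp]
      exact hST.isSymmetric _ _
    show ⟪(star T * T - S * T) x, x⟫_𝕜 = 0
    rw [sub_apply, inner_sub_left, mul_apply_eq_comp, star_eq_adjoint, adjoint_inner_left, hproj,
      inner_self_eq_norm_sq_to_K, inner_self_eq_norm_sq_to_K, hnorm, sub_self]
  calc adjoint T = star (T * S * T) := by rw [hTST, star_eq_adjoint]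
    _ = star T * T * S := by rw [star_mul, hTS.star_eq, _root_.mul_assoc]
    _ = S := by rw [hTT, hSTS]

theorem exists_tendsto_inner_of_dense {T : ℕ → E →L[𝕜] E} {C : NNReal} (hT : ∀ n, ‖T n‖ ≤ C)
    {D : Set E} (hD : Dense D) (h : ∀ x ∈ D, ∀ y ∈ D, CauchySeq fun n => ⟪T n x, y⟫_𝕜) :
    ∃ O : E →L[𝕜] E, ∀ x y, Tendsto (fun n => ⟪T n x, y⟫_𝕜) atTop (𝓝 ⟪O x, y⟫_𝕜) := by
  have hlip_left : ∀ n y, LipschitzWith (C * ‖y‖₊) fun x => ⟪T n x, y⟫_𝕜 := fun n y =>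
    LipschitzWith.of_dist_le_mul fun x x' => by
      simpa [dist_eq_norm, ← inner_sub_left, ← map_sub, mul_right_comm] using
        norm_inner_apply_le (hT n) (x - x') y
  have hlip_right : ∀ n x, LipschitzWith (C * ‖x‖₊) fun y => ⟪T n x, y⟫_𝕜 := fun n x =>
    LipschitzWith.of_dist_le_mul fun y y' => by
      simpa [dist_eq_norm, ← inner_sub_right, mul_right_comm] using
        norm_inner_apply_le (hT n) x (y - y')
  have hcauchy : ∀ x y, CauchySeq fun n => ⟪T n x, y⟫_𝕜 := fun x =>
    cauchySeq_of_lipschitzWith_of_dense (fun n => hlip_right n x) hD fun y hy =>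
      cauchySeq_of_lipschitzWith_of_dense (fun n => hlip_left n y) hD
        (fun x' hx' => h x' hx' y hy) x
  choose L hL using fun x y => cauchySeq_tendsto_of_complete (hcauchy x y)
  have unique {x y} {c : 𝕜} (hc : Tendsto (fun n => ⟪T n x, y⟫_𝕜) atTop (𝓝 c)) : L x y = c :=
    tendsto_nhds_unique (hL x y) hc
  let B : E →L⋆[𝕜] E →L[𝕜] 𝕜 := LinearMap.mkContinuous₂
    (LinearMap.mk₂'ₛₗ (starRingEnd 𝕜) (RingHom.id 𝕜) L
      (fun x x' y => unique <| by simpa only [map_add, inner_add_left] using (hL x y).add (hL x' y))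
      (fun c x y => unique <| by
        simpa only [map_smul, inner_smul_left, smul_eq_mul] using
          (hL x y).const_mul (starRingEnd 𝕜 c))
      (fun x y y' => unique <| by simpa only [inner_add_right] using (hL x y).add (hL x y'))
      (fun c x y => unique <| by
        simpa only [inner_smul_right, smul_eq_mul, RingHom.id_apply] using (hL x y).const_mul c))
    C fun x y => le_of_tendsto' (hL x y).norm fun n => norm_inner_apply_le (hT n) x y
  refine ⟨InnerProductSpace.continuousLinearMapOfBilin B, fun x y => ?_⟩
  rw [InnerProductSpace.continuousLinearMapOfBilin_apply]
  exact hL x y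

end HilbertSpace

theorem Equiv.swap_mul_swap_conj {α : Type*} [DecidableEq α] (τ : Equiv.Perm α) (k n l m : α) :
    τ * (Equiv.swap k n * Equiv.swap l m) * τ⁻¹
      = Equiv.swap (τ k) (τ n) * Equiv.swap (τ l) (τ m) := by
  rw [Equiv.swap_apply_apply, Equiv.swap_apply_apply]
  group

theorem PB.eventually_notMem_support {a b : PB} (ha : a.Valid) (hb : b.Valid) (k : ℕ) :
    ∀ᶠ n in atTop, n ∉ a.support ∧ n ∉ b.support ∧ n ≠ k :=
  Nat.cofinite_eq_atTop ▸ ha.support_finite.eventually_cofinite_notMem.and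
    (hb.support_finite.eventually_cofinite_notMem.and (eventually_cofinite_ne k))

section Representation

open Equiv ContinuousLinearMap

variable {H : Type*} [NormedAddCommGroup H] [InnerProductSpace ℂ H]

structure IsContractiveRep (π : PB → H →L[ℂ] H) : Prop where
  map_mul : ∀ a b : PB, a.Valid → b.Valid → π (a.mul b) = π a ∘L π b
  norm_le_one : ∀ r : PB, r.Valid → ‖π r‖ ≤ 1

def IsCentralVector (π : PB → H →L[ℂ] H) (ξ : H) : Prop :=
  ∀ s : Perm ℕ, FinPerm s → ∀ r : PB, r.Valid →
    ⟪π ((permPB s).mul r) ξ, ξ⟫ = ⟪π (r.mul (permPB s)) ξ, ξ⟫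

def IsSwapWeakLimit (π : PB → H →L[ℂ] H) (O : ℕ → H →L[ℂ] H) : Prop :=
  ∀ k, ∀ η ζ : H, Tendsto (fun n => ⟪π (permPB (swap k n)) η, ζ⟫) atTop (𝓝 ⟪O k η, ζ⟫)

namespace IsContractiveRep

variable {π : PB → H →L[ℂ] H} {ξ : H}

theorem apply_apply (hπ : IsContractiveRep π) {a b : PB} (ha : a.Valid) (hb : b.Valid) (v : H) :
    π a (π b v) = π (a.mul b) v := by
  rw [hπ.map_mul a b ha hb, comp_apply]

variable [CompleteSpace H]

theorem adjoint_eq_inv (hπ : IsContractiveRep π) {g : PB} (hg : g.Valid) :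
    adjoint (π g) = π g.inv := by
  refine adjoint_eq_of_contractive_pseudoinverse (hπ.norm_le_one g hg)
    (hπ.norm_le_one _ hg.inv) ?_ ?_
  · simp only [ContinuousLinearMap.mul_def]
    rw [← hπ.map_mul _ _ hg hg.inv, ← hπ.map_mul _ _ (hg.mul hg.inv) hg, PB.mul_inv_mul hg]
  · simp only [ContinuousLinearMap.mul_def]
    rw [← hπ.map_mul _ _ hg.inv hg, ← hπ.map_mul _ _ (hg.inv.mul hg) hg.inv, PB.inv_mul_inv hg]

theorem inner_permPB_left (hπ : IsContractiveRep π) {s : Perm ℕ} (hs : FinPerm s) (x y : H) :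
    ⟪π (permPB s) x, y⟫ = ⟪x, π (permPB s⁻¹) y⟫ := by
  rw [← hs.inv_permPB, ← hπ.adjoint_eq_inv hs.permPB_valid, adjoint_inner_right]

theorem inner_swap_left (hπ : IsContractiveRep π) (k n : ℕ) (x y : H) :
    ⟪π (permPB (swap k n)) x, y⟫ = ⟪x, π (permPB (swap k n)) y⟫ := by
  simpa using hπ.inner_permPB_left (finPerm_swap k n) x y

theorem inner_apply_apply (hπ : IsContractiveRep π) {a b c : PB} (ha : a.Valid) (hb : b.Valid)
    (hc : c.Valid) : ⟪π c (π a ξ), π b ξ⟫ = ⟪π (b.inv.mul (c.mul a)) ξ, ξ⟫ := by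
  rw [hπ.apply_apply hc ha, ← hπ.apply_apply hb.inv (hc.mul ha), ← hπ.adjoint_eq_inv hb,
    adjoint_inner_left]

/-- `τ` commutes with `a` and `b*`, so conjugation by `τ` passes to the state, which is
`S_∞`-central. -/
theorem inner_permPB_conj (hπ : IsContractiveRep π) (hξ : IsCentralVector π ξ) {a b : PB}
    (ha : a.Valid) (hb : b.Valid) {σ τ : Perm ℕ} (hσ : FinPerm σ) (hτ : FinPerm τ)
    (hτa : ∀ x ∈ a.support, τ x = x) (hτb : ∀ x ∈ b.support, τ x = x) :
    ⟪π (permPB (τ * σ * τ⁻¹)) (π a ξ), π b ξ⟫ = ⟪π (permPB σ) (π a ξ), π b ξ⟫ := by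
  have hτ'a : (permPB τ⁻¹).mul a = a.mul (permPB τ⁻¹) :=
    permPB_mul_comm fun x hx => by rw [Perm.inv_eq_iff_eq, hτa x hx]
  have hτb' : (permPB τ).mul b.inv = b.inv.mul (permPB τ) :=
    permPB_mul_comm fun x hx => hτb x (PB.support_inv_subset hb hx)
  have hconj : b.inv.mul ((permPB (τ * σ * τ⁻¹)).mul a)
      = (permPB τ).mul ((b.inv.mul ((permPB σ).mul a)).mul (permPB τ⁻¹)) := by
    simp only [← permPB_mul_permPB, PB.mul_assoc]
    rw [hτ'a, ← PB.mul_assoc b.inv, ← hτb', PB.mul_assoc]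
  have hr : (b.inv.mul ((permPB σ).mul a)).Valid := hb.inv.mul (hσ.permPB_valid.mul ha)
  rw [hπ.inner_apply_apply ha hb ((hτ.mul hσ).mul hτ.inv).permPB_valid,
    hπ.inner_apply_apply ha hb hσ.permPB_valid, hconj, hξ τ hτ _ (hr.mul hτ.inv.permPB_valid),
    PB.mul_assoc, permPB_mul_permPB, inv_mul_cancel, permPB_one, PB.mul_one]

theorem inner_swap_eq_of_notMem (hπ : IsContractiveRep π) (hξ : IsCentralVector π ξ) {a b : PB}
    (ha : a.Valid) (hb : b.Valid) {k n m : ℕ} (hna : n ∉ a.support) (hnb : n ∉ b.support)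
    (hnk : n ≠ k) (hma : m ∉ a.support) (hmb : m ∉ b.support) (hmk : m ≠ k) :
    ⟪π (permPB (swap k n)) (π a ξ), π b ξ⟫ = ⟪π (permPB (swap k m)) (π a ξ), π b ξ⟫ := by
  have hconj : swap n m * swap k n * (swap n m)⁻¹ = swap k m := by
    rw [← swap_apply_apply, swap_apply_of_ne_of_ne hnk.symm hmk.symm, swap_apply_left]
  have hfix : ∀ (s : Set ℕ), n ∉ s → m ∉ s → ∀ x ∈ s, swap n m x = x := fun s hn hm x hx =>
    swap_apply_of_ne_of_ne (ne_of_mem_of_not_mem hx hn) (ne_of_mem_of_not_mem hx hm)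
  rw [← hconj]
  exact (hπ.inner_permPB_conj hξ ha hb (finPerm_swap k n) (finPerm_swap n m)
    (hfix _ hna hma) (hfix _ hnb hmb)).symm

theorem exists_tendsto_inner_swap (hπ : IsContractiveRep π) (hξ : IsCentralVector π ξ) {a b : PB}
    (ha : a.Valid) (hb : b.Valid) (k : ℕ) :
    ∃ c, Tendsto (fun n => ⟪π (permPB (swap k n)) (π a ξ), π b ξ⟫) atTop (𝓝 c) := by
  obtain ⟨m, hm⟩ := (PB.eventually_notMem_support ha hb k).exists
  refine ⟨⟪π (permPB (swap k m)) (π a ξ), π b ξ⟫, tendsto_const_nhds.congr' ?_⟩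
  filter_upwards [PB.eventually_notMem_support ha hb k] with n hn
  exact hπ.inner_swap_eq_of_notMem hξ ha hb hm.1 hm.2.1 hm.2.2 hn.1 hn.2.1 hn.2.2

theorem exists_isSwapWeakLimit (hπ : IsContractiveRep π) (hξ : IsCentralVector π ξ)
    (hcyc : Dense (Submodule.span ℂ {x | ∃ r : PB, r.Valid ∧ x = π r ξ} : Set H)) :
    ∃ O, IsSwapWeakLimit π O := by
  choose O hO using fun k => exists_tendsto_inner_of_dense (C := 1)
    (fun n => by simpa using hπ.norm_le_one _ (finPerm_swap k n).permPB_valid) hcyc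
    fun x hx y hy => by
      obtain ⟨c, hc⟩ := exists_tendsto_inner_of_mem_span (fun _ hx _ hy => by
        obtain ⟨a, ha, rfl⟩ := hx
        obtain ⟨b, hb, rfl⟩ := hy
        exact hπ.exists_tendsto_inner_swap hξ ha hb k) hx hy
      exact hc.cauchySeq
  exact ⟨O, hO⟩

theorem inner_eq_of_notMem (hπ : IsContractiveRep π) (hξ : IsCentralVector π ξ)
    {O : ℕ → H →L[ℂ] H} (hO : IsSwapWeakLimit π O) {a b : PB} (ha : a.Valid) (hb : b.Valid)
    {k n : ℕ} (hna : n ∉ a.support) (hnb : n ∉ b.support) (hnk : n ≠ k) :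
    ⟪O k (π a ξ), π b ξ⟫ = ⟪π (permPB (swap k n)) (π a ξ), π b ξ⟫ :=
  tendsto_nhds_unique (hO k _ _) <| tendsto_const_nhds.congr' <|
    (PB.eventually_notMem_support ha hb k).mono fun _ hm =>
      hπ.inner_swap_eq_of_notMem hξ ha hb hna hnb hnk hm.1 hm.2.1 hm.2.2

/-- `⟪O k O l π a ξ, π b ξ⟫` is the iterated limit of `⟪π (k n) π (l m) π a ξ, π b ξ⟫`; once `n`
and `m` are beyond the supports, conjugation by swaps moves them to `N` and `N + 1`. -/
theorem inner_comp_eq (hπ : IsContractiveRep π) (hξ : IsCentralVector π ξ)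
    {O : ℕ → H →L[ℂ] H} (hO : IsSwapWeakLimit π O) {a b : PB} (ha : a.Valid) (hb : b.Valid)
    {k l N : ℕ} (hNa : ∀ x ∈ a.support, x < N) (hNb : ∀ x ∈ b.support, x < N) (hk : k < N)
    (hl : l < N) :
    ⟪O k (O l (π a ξ)), π b ξ⟫ = ⟪π (permPB (swap k N * swap l (N + 1))) (π a ξ), π b ξ⟫ := by
  refine tendsto_nhds_unique (hO k _ _) (tendsto_const_nhds.congr' ?_)
  filter_upwards [eventually_ge_atTop N] with n hn
  have hkn := (finPerm_swap k n).permPB_valid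
  have hσ : FinPerm (swap k N * swap l (n + 1)) := (finPerm_swap _ _).mul (finPerm_swap _ _)
  have hfix₁ : ∀ x ≤ N, swap (n + 1) (N + 1) x = x := fun x hx =>
    swap_apply_of_ne_of_ne (by omega) (by omega)
  have hfix₂ : ∀ x, x < N ∨ x = n + 1 → swap n N x = x := fun x hx =>
    swap_apply_of_ne_of_ne (by omega) (by omega)
  have hfresh : n + 1 ∉ ((permPB (swap k n)).mul b).support := fun h => by
    rcases PB.support_mul_subset _ _ h with h | h
    · exact PB.support_permPB_subset _ h (swap_apply_of_ne_of_ne (by omega) (by omega))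
    · exact absurd (hNb _ h) (by omega)
  calc ⟪π (permPB (swap k N * swap l (N + 1))) (π a ξ), π b ξ⟫
      = ⟪π (permPB (swap k N * swap l (n + 1))) (π a ξ), π b ξ⟫ := by
        rw [← hπ.inner_permPB_conj hξ ha hb hσ (finPerm_swap (n + 1) (N + 1))
          (fun x hx => hfix₁ x (hNa x hx).le) (fun x hx => hfix₁ x (hNb x hx).le),
          swap_mul_swap_conj, hfix₁ k hk.le, hfix₁ N le_rfl, hfix₁ l hl.le, swap_apply_left]
    _ = ⟪π (permPB (swap k n * swap l (n + 1))) (π a ξ), π b ξ⟫ := by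
        rw [← hπ.inner_permPB_conj hξ ha hb ((finPerm_swap k n).mul (finPerm_swap l (n + 1)))
          (finPerm_swap n N) (fun x hx => hfix₂ x (Or.inl (hNa x hx)))
          (fun x hx => hfix₂ x (Or.inl (hNb x hx))), swap_mul_swap_conj,
          hfix₂ k (Or.inl hk), hfix₂ l (Or.inl hl), hfix₂ (n + 1) (Or.inr rfl), swap_apply_left]
    _ = ⟪π (permPB (swap l (n + 1))) (π a ξ), π ((permPB (swap k n)).mul b) ξ⟫ := by
        rw [← permPB_mul_permPB, ← hπ.apply_apply hkn (finPerm_swap _ _).permPB_valid,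
          hπ.inner_swap_left, hπ.apply_apply hkn hb]
    _ = ⟪O l (π a ξ), π ((permPB (swap k n)).mul b) ξ⟫ :=
        (hπ.inner_eq_of_notMem hξ hO ha (hkn.mul hb) (fun h => absurd (hNa _ h) (by omega))
          hfresh (by omega)).symm
    _ = ⟪π (permPB (swap k n)) (O l (π a ξ)), π b ξ⟫ := by
        rw [← hπ.apply_apply hkn hb, hπ.inner_swap_left]

theorem comp_comm (hπ : IsContractiveRep π) (hξ : IsCentralVector π ξ)
    (hcyc : Dense (Submodule.span ℂ {x | ∃ r : PB, r.Valid ∧ x = π r ξ} : Set H))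
    {O : ℕ → H →L[ℂ] H} (hO : IsSwapWeakLimit π O) (k l : ℕ) : O k ∘L O l = O l ∘L O k := by
  rcases eq_or_ne k l with rfl | hkl
  · rfl
  refine ext_of_inner_of_dense_span hcyc ?_
  rintro _ ⟨a, ha, rfl⟩ _ ⟨b, hb, rfl⟩
  obtain ⟨M, hM⟩ := (ha.support_finite.union hb.support_finite).bddAbove
  set N := max M (max k l) + 1
  have hNa : ∀ x ∈ a.support, x < N := fun x hx => by have := hM (Or.inl hx); omega
  have hNb : ∀ x ∈ b.support, x < N := fun x hx => by have := hM (Or.inr hx); omega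
  have hfix : ∀ x < N, swap N (N + 1) x = x := fun x hx =>
    swap_apply_of_ne_of_ne (by omega) (by omega)
  have hcomm : swap k N * swap l (N + 1) = swap l (N + 1) * swap k N :=
    (Perm.disjoint_swap_swap (by simp; omega)).commute.eq
  rw [comp_apply, comp_apply, hπ.inner_comp_eq hξ hO ha hb hNa hNb (by omega) (by omega),
    hπ.inner_comp_eq hξ hO ha hb hNa hNb (by omega) (by omega), hcomm,
    ← hπ.inner_permPB_conj hξ ha hb ((finPerm_swap _ _).mul (finPerm_swap _ _))
      (finPerm_swap N (N + 1))
      (fun x hx => hfix x (hNa x hx)) (fun x hx => hfix x (hNb x hx)),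
    swap_mul_swap_conj, hfix l (by omega), hfix k (by omega), swap_apply_left, swap_apply_right]

theorem permPB_comp_comp_inv (hπ : IsContractiveRep π) {O : ℕ → H →L[ℂ] H}
    (hO : IsSwapWeakLimit π O) {s : Perm ℕ} (hs : FinPerm s) (k : ℕ) :
    π (permPB s) ∘L O k ∘L π (permPB s⁻¹) = O (s k) := by
  ext η
  refine ext_inner_right ℂ fun ζ => ?_
  rw [comp_apply, comp_apply, hπ.inner_permPB_left hs]
  refine tendsto_nhds_unique (hO k _ _) ((hO (s k) η ζ).congr' ?_)
  have hsn : ∀ᶠ n in atTop, s n = n :=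
    (Nat.cofinite_eq_atTop ▸ hs.eventually_cofinite_notMem).mono fun _ => not_not.1
  filter_upwards [hsn] with n hn
  rw [← hπ.inner_permPB_left hs,
    hπ.apply_apply (finPerm_swap k n).permPB_valid hs.inv.permPB_valid,
    hπ.apply_apply hs.permPB_valid ((finPerm_swap k n).permPB_valid.mul hs.inv.permPB_valid),
    permPB_mul_permPB, permPB_mul_permPB, ← _root_.mul_assoc, ← swap_apply_apply, hn]

end IsContractiveRep

end Representation

theorem stmt13_general
    {H : Type*} [NormedAddCommGroup H] [InnerProductSpace ℂ H] [CompleteSpace H]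
    (π : PB → H →L[ℂ] H) (ξ : H)
    (hmul : ∀ a b : PB, a.Valid → b.Valid → π (a.mul b) = π a ∘L π b)
    (hnorm : ∀ r : PB, r.Valid → ‖π r‖ ≤ 1)
    (hcentral : ∀ s : Equiv.Perm ℕ, FinPerm s → ∀ r : PB, r.Valid →
      ⟪π ((permPB s).mul r) ξ, ξ⟫ = ⟪π (r.mul (permPB s)) ξ, ξ⟫)
    (hcyc : (Submodule.span ℂ {x | ∃ r : PB, r.Valid ∧ x = π r ξ}).topologicalClosure = ⊤) :
    ∃ O : ℕ → H →L[ℂ] H,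
      (∀ k, ∀ η ζ : H,
        Tendsto (fun n => ⟪π (permPB (Equiv.swap k n)) η, ζ⟫) atTop (𝓝 ⟪O k η, ζ⟫)) ∧
      (∀ k l, O k ∘L O l = O l ∘L O k) ∧
      (∀ s : Equiv.Perm ℕ, FinPerm s → ∀ k,
        π (permPB s) ∘L O k ∘L π (permPB s⁻¹) = O (s k)) := by
  have hπ : IsContractiveRep π := ⟨hmul, hnorm⟩
  have hdense := Submodule.dense_iff_topologicalClosure_eq_top.2 hcyc
  obtain ⟨O, hO⟩ := hπ.exists_isSwapWeakLimit hcentral hdense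
  exact ⟨O, hO, hπ.comp_comm hcentral hdense hO, fun s hs => hπ.permPB_comp_comp_inv hO hs⟩

/-- Let `π_f` be a cyclic `*`-representation of `R_∞` with cyclic
vector `ξ_f` realizing an `S_∞`-central state `f`.  Then for each `k` the weak
operator limit `O_k = lim_n π_f((k n))` exists, the `O_k` pairwise commute, and
`π_f(s) O_k π_f(s⁻¹) = O_{s(k)}` for all `s ∈ S_∞`. -/
theorem stmt13
    {H : Type*} [NormedAddCommGroup H] [InnerProductSpace ℂ H] [CompleteSpace H]
    (π : PB → H →L[ℂ] H) (ξ : H)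
    (hone : π PB.one = 1)
    (hmul : ∀ a b : PB, a.Valid → b.Valid → π (a.mul b) = π a ∘L π b)
    (hnorm : ∀ r : PB, r.Valid → ‖π r‖ ≤ 1)
    (hcentral : ∀ s : Equiv.Perm ℕ, FinPerm s → ∀ r : PB, r.Valid →
      ⟪π ((permPB s).mul r) ξ, ξ⟫ = ⟪π (r.mul (permPB s)) ξ, ξ⟫)
    (hcyc : (Submodule.span ℂ {x | ∃ r : PB, r.Valid ∧ x = π r ξ}).topologicalClosure = ⊤) :
    ∃ O : ℕ → H →L[ℂ] H,
      (∀ k, ∀ η ζ : H,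
        Tendsto (fun n => ⟪π (permPB (Equiv.swap k n)) η, ζ⟫) atTop (𝓝 ⟪O k η, ζ⟫)) ∧
      (∀ k l, O k ∘L O l = O l ∘L O k) ∧
      (∀ s : Equiv.Perm ℕ, FinPerm s → ∀ k,
        π (permPB s) ∘L O k ∘L π (permPB s⁻¹) = O (s k)) :=
  stmt13_general π ξ hmul hnorm hcentral hcyc
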